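/- There exists a constant K > 0 such that for every s ∈ ℕ and every root y₀ of He_{s+1}, the Lagrange basis polynomial L_{s;y₀} satisfies sup_{y∈ℝ} |L_{s;y₀}(y)| · √(g(y)) ≤ e^{K s}, where g(y) = (2π)^{-1/2} e^{-y²/2}. -/

import Mathlib

/-!
Rolle's theorem applied to `He_n(x) e^{-x²/2}`, whose derivative is `-He_{n+1}(x) e^{-x²/2}`,
on the gaps between the roots of `He_n` and on the two outer half-lines, yields `n + 1`
distinct real roots of `He_{n+1}`. Hence `He_{s+1} = ∏ (X - y')` and the denominator of
`L_{s;y₀}` is `He_{s+1}'(y₀) = (s + 1) He_s(y₀)`. The Turán-type inequality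
`He_{n+1}² - He_n He_{n+2} ≥ n!` at the root `y₀` gives `(s + 1) He_s(y₀)² ≥ s!`, and the
three-term recursion confines the roots to `y'² < 4(s + 1)`, so the squared numerator is at most
`(2y² + 8(s + 1))^s`. Finally `v^s ≤ s! e^v` with `v = y²/2 + 2(s + 1)` lets the Gaussian weight
absorb numerator and factorial, giving `K = 3`.
-/

/-- The Lagrange basis polynomial (as a function) associated with the root `y₀`
of the probabilist Hermite polynomial `He_{s+1}`:
`L_{s;y₀}(y) = ∏_{y' root of He_{s+1}, y' ≠ y₀} (y - y')/(y₀ - y')`. -/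
noncomputable def lagrangeHermite (s : ℕ) (y₀ y : ℝ) : ℝ :=
  ∏ y' ∈ ((((Polynomial.hermite (s + 1)).map (Int.castRingHom ℝ)).roots).toFinset).erase y₀,
    (y - y') / (y₀ - y')

open Polynomial Filter Topology Set Real
open scoped Nat

section HalfLineRolle

variable {f f' : ℝ → ℝ} {a l : ℝ}

theorem exists_hasDerivAt_eq_zero_of_tendsto_atTop (hff' : ∀ x ∈ Ioi a, HasDerivAt f (f' x) x)
    (hfa : Tendsto f (𝓝[>] a) (𝓝 l)) (hfl : Tendsto f atTop (𝓝 l)) :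
    ∃ c ∈ Ioi a, f' c = 0 := by
  -- Substituting `x = tan θ` turns `(a, ∞)` into the bounded interval `(arctan a, π / 2)`.
  have hI : Ioo (arctan a) (π / 2) ⊆ Ioo (-(π / 2)) (π / 2) := fun θ hθ =>
    ⟨(neg_pi_div_two_lt_arctan a).trans hθ.1, hθ.2⟩
  have htan : MapsTo tan (Ioo (arctan a) (π / 2)) (Ioi a) := fun θ hθ => by
    simpa [tan_arctan] using
      tan_lt_tan_of_lt_of_lt_pi_div_two (neg_pi_div_two_lt_arctan a) hθ.2 hθ.1
  have hcont : ContinuousOn (f ∘ tan) (Ioo (arctan a) (π / 2)) :=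
    ContinuousOn.comp (fun x hx => (hff' x hx).continuousAt.continuousWithinAt)
      (continuousOn_tan_Ioo.mono hI) htan
  have hleft : Tendsto tan (𝓝[>] arctan a) (𝓝[>] a) := by
    refine tendsto_nhdsWithin_iff.mpr ⟨?_, ?_⟩
    · have := (continuousOn_tan_Ioo.continuousAt (Ioo_mem_nhds (neg_pi_div_two_lt_arctan a)
        (arctan_lt_pi_div_two a))).tendsto
      rw [tan_arctan] at this
      exact this.mono_left nhdsWithin_le_nhds
    · filter_upwards [Ioo_mem_nhdsGT (arctan_lt_pi_div_two a)] with θ hθ using htan hθ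
  obtain ⟨θ, hθ, hextr⟩ := exists_isLocalExtr_Ioo_of_tendsto (arctan_lt_pi_div_two a) hcont
    (hfa.comp hleft) (hfl.comp tendsto_tan_pi_div_two)
  rw [← arctan_tan (hI hθ).1 (hI hθ).2] at hextr
  have hf : IsLocalExtr f (tan θ) := by
    simpa [Function.comp_def, tan_arctan] using
      hextr.comp_continuous continuous_arctan.continuousAt
  exact ⟨tan θ, htan hθ, hf.hasDerivAt_eq_zero (hff' _ (htan hθ))⟩

theorem exists_hasDerivAt_eq_zero_of_tendsto_atBot (hff' : ∀ x ∈ Iio a, HasDerivAt f (f' x) x)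
    (hfa : Tendsto f (𝓝[<] a) (𝓝 l)) (hfl : Tendsto f atBot (𝓝 l)) :
    ∃ c ∈ Iio a, f' c = 0 := by
  obtain ⟨c, hc, hc0⟩ := exists_hasDerivAt_eq_zero_of_tendsto_atTop
    (f := fun x => f (-x)) (f' := fun x => -f' (-x)) (a := -a)
    (fun x hx => by
      simpa [Function.comp_def] using
        (hff' (-x) (mem_Iio.mpr (neg_lt.mp hx))).comp x (hasDerivAt_neg x))
    (hfa.comp tendsto_neg_nhdsGT_neg) (hfl.comp tendsto_neg_atTop_atBot)
  exact ⟨-c, mem_Iio.mpr (neg_lt.mpr hc), neg_eq_zero.mp hc0⟩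

end HalfLineRolle

theorem Finset.card_lt_card_of_interlaced {α : Type*} [LinearOrder α] {s t : Finset α}
    (hright : ∀ x ∈ s, ∃ z ∈ t, x < z ∧ ∀ y ∈ s, x < y → z < y)
    (hleft : ∃ z ∈ t, ∀ y ∈ s, z < y) : s.card < t.card := by
  choose! g hgt hxg hgy using hright
  obtain ⟨z, hz, hzs⟩ := hleft
  have hmono : StrictMonoOn g s := fun x hx y hy hxy => (hgy x hx y hy hxy).trans (hxg y hy)
  calc s.card ≤ (t.erase z).card :=
        Finset.card_le_card_of_injOn g (fun x hx =>
          Finset.mem_erase.mpr ⟨((hzs x hx).trans (hxg x hx)).ne', hgt x hx⟩) hmono.injOn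
    _ < t.card := Finset.card_erase_lt_of_mem hz

theorem Polynomial.Monic.eq_nodal_roots_toFinset {K : Type*} [Field K] [DecidableEq K]
    {p : K[X]} (hp : p.Monic) (h : p.natDegree ≤ p.roots.toFinset.card) :
    p = Lagrange.nodal p.roots.toFinset id := by
  have hcard : Multiset.card p.roots = p.natDegree :=
    le_antisymm (card_roots' p) (h.trans (Multiset.toFinset_card_le _))
  have hnodup : p.roots.Nodup := Multiset.toFinset_card_eq_card_iff_nodup.mp
    (le_antisymm (Multiset.toFinset_card_le _) (hcard ▸ h))
  conv_lhs => rw [← prod_multiset_X_sub_C_of_monic_of_roots_card_eq hp hcard]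
  rw [Lagrange.nodal, Finset.prod_eq_multiset_prod, Multiset.toFinset_val, hnodup.dedup]
  rfl

theorem eval_derivative_nodal_eq_prod_erase {K : Type*} [Field K] [DecidableEq K] {s : Finset K}
    {x : K} (hx : x ∈ s) :
    (Lagrange.nodal s id).derivative.eval x = ∏ y ∈ s.erase x, (x - y) := by
  rw [← id_eq x, Lagrange.eval_nodal_derivative_eval_node_eq hx, Lagrange.eval_nodal]
  rfl

theorem derivative_hermite_succ (n : ℕ) :
    derivative (hermite (n + 1)) = (n + 1 : ℤ[X]) * hermite n := by
  induction n with
  | zero => simp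
  | succ n ih =>
    rw [hermite_succ (n + 1), derivative_sub, derivative_mul, derivative_X, one_mul, ih,
      derivative_mul, hermite_succ n]
    simp only [derivative_add, derivative_natCast, derivative_one, add_zero, zero_mul, zero_add]
    push_cast
    ring

theorem hermite_succ_succ (n : ℕ) :
    hermite (n + 2) = X * hermite (n + 1) - (n + 1 : ℤ[X]) * hermite n := by
  rw [hermite_succ (n + 1), derivative_hermite_succ]

noncomputable def realHermite (n : ℕ) : ℝ[X] := (hermite n).map (Int.castRingHom ℝ)

section RealHermite

variable (n : ℕ) (x : ℝ)

theorem realHermite_monic : (realHermite n).Monic := (hermite_monic n).map _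

theorem natDegree_realHermite : (realHermite n).natDegree = n := by
  rw [realHermite, (hermite_monic n).natDegree_map, natDegree_hermite]

theorem realHermite_one : realHermite 1 = X := by simp [realHermite]

theorem eval_realHermite_zero : (realHermite 0).eval x = 1 := by simp [realHermite]

theorem eval_realHermite_succ_succ : (realHermite (n + 2)).eval x =
    x * (realHermite (n + 1)).eval x - (n + 1) * (realHermite n).eval x := by
  simp only [realHermite, hermite_succ_succ, Polynomial.map_sub, Polynomial.map_mul,
    Polynomial.map_X, Polynomial.map_add, Polynomial.map_natCast, Polynomial.map_one, eval_sub,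
    eval_mul, eval_X, eval_add, eval_natCast, eval_one]

theorem realHermite_succ :
    realHermite (n + 1) = X * realHermite n - derivative (realHermite n) := by
  rw [realHermite, realHermite, hermite_succ]
  simp [derivative_map]

theorem derivative_realHermite_succ :
    derivative (realHermite (n + 1)) = (n + 1 : ℝ[X]) * realHermite n := by
  simp only [realHermite, derivative_map, derivative_hermite_succ, Polynomial.map_mul,
    Polynomial.map_add, Polynomial.map_natCast, Polynomial.map_one]

end RealHermite

theorem factorial_le_turan_realHermite (n : ℕ) (x : ℝ) :
    (n ! : ℝ) ≤ (realHermite (n + 1)).eval x ^ 2 -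
      (realHermite n).eval x * (realHermite (n + 2)).eval x := by
  induction n with
  | zero =>
    simp only [Nat.factorial_zero, Nat.cast_one, zero_add, realHermite_one, eval_X,
      eval_realHermite_zero, eval_realHermite_succ_succ, CharP.cast_eq_zero, mul_one, one_mul]
    linarith
  | succ n ih =>
    have hstep : (realHermite (n + 2)).eval x ^ 2 -
        (realHermite (n + 1)).eval x * (realHermite (n + 3)).eval x =
        (n + 1) * ((realHermite (n + 1)).eval x ^ 2 -
          (realHermite n).eval x * (realHermite (n + 2)).eval x) +
        (realHermite (n + 1)).eval x ^ 2 := by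
      rw [eval_realHermite_succ_succ (n + 1), eval_realHermite_succ_succ n]
      push_cast
      ring
    rw [hstep, Nat.factorial_succ]
    push_cast
    nlinarith [sq_nonneg ((realHermite (n + 1)).eval x)]

theorem factorial_le_mul_eval_sq_of_isRoot {n : ℕ} {x : ℝ}
    (hx : (realHermite (n + 1)).IsRoot x) :
    (n ! : ℝ) ≤ (n + 1) * (realHermite n).eval x ^ 2 := by
  have h := factorial_le_turan_realHermite n x
  rw [eval_realHermite_succ_succ, hx.eq_zero] at h
  linarith

theorem half_abs_mul_abs_eval_le_abs_eval_succ (n : ℕ) {x : ℝ} (hx : 4 * (n + 1) ≤ x ^ 2) :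
    |x| / 2 * |(realHermite n).eval x| ≤ |(realHermite (n + 1)).eval x| := by
  induction n with
  | zero => simp [eval_realHermite_zero, realHermite_one]
  | succ n ih =>
    push_cast at hx
    have hgrow := ih (by linarith)
    have hsq : 4 * (n + 2) ≤ |x| * |x| := by rw [← sq, sq_abs]; linarith
    have hcross : (n + 1) * |(realHermite n).eval x| ≤
        |x| / 2 * |(realHermite (n + 1)).eval x| :=
      calc (n + 1) * |(realHermite n).eval x|
          ≤ |x| / 2 * (|x| / 2 * |(realHermite n).eval x|) := by
            nlinarith [abs_nonneg ((realHermite n).eval x)]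
        _ ≤ |x| / 2 * |(realHermite (n + 1)).eval x| := by gcongr
    rw [eval_realHermite_succ_succ]
    calc |x| / 2 * |(realHermite (n + 1)).eval x|
        = |x * (realHermite (n + 1)).eval x| - |x| / 2 * |(realHermite (n + 1)).eval x| := by
          rw [abs_mul]; ring
      _ ≤ |x * (realHermite (n + 1)).eval x| - |(n + 1) * (realHermite n).eval x| := by
          rw [abs_mul (_ + 1), abs_of_pos (by positivity : (0 : ℝ) < n + 1)]; linarith
      _ ≤ _ := abs_sub_abs_le_abs_sub _ _

theorem sq_lt_of_isRoot_realHermite_succ {n : ℕ} {x : ℝ} (hx : (realHermite (n + 1)).IsRoot x) :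
    x ^ 2 < 4 * (n + 1) := by
  by_contra! h
  have hgrow := half_abs_mul_abs_eval_le_abs_eval_succ n h
  have hx0 : 0 < |x| := abs_pos.mpr (by rintro rfl; norm_num at h; linarith)
  rw [hx.eq_zero, abs_zero] at hgrow
  have hzero : (realHermite n).eval x = 0 :=
    abs_nonpos_iff.mp (nonpos_of_mul_nonpos_right hgrow (by positivity))
  have hfac := factorial_le_mul_eval_sq_of_isRoot hx
  rw [hzero] at hfac
  linarith [(by positivity : (0 : ℝ) < n !)]

noncomputable def hermiteGaussian (n : ℕ) (x : ℝ) : ℝ :=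
  (realHermite n).eval x * exp (-(x ^ 2 / 2))

section HermiteGaussian

variable (n : ℕ)

theorem hasDerivAt_hermiteGaussian (x : ℝ) :
    HasDerivAt (hermiteGaussian n) (-hermiteGaussian (n + 1) x) x := by
  have hexp : HasDerivAt (fun x => exp (-(x ^ 2 / 2))) (exp (-(x ^ 2 / 2)) * -x) x := by
    simpa using (((hasDerivAt_pow 2 x).div_const 2).neg).exp
  refine (((realHermite n).hasDerivAt x).mul hexp).congr_deriv ?_
  simp only [hermiteGaussian, realHermite_succ, eval_sub, eval_mul, eval_X]
  ring

theorem continuous_hermiteGaussian : Continuous (hermiteGaussian n) :=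
  continuous_iff_continuousAt.mpr fun x => (hasDerivAt_hermiteGaussian n x).continuousAt

theorem hermiteGaussian_eq_zero_iff {x : ℝ} :
    hermiteGaussian n x = 0 ↔ (realHermite n).IsRoot x := by
  simp [hermiteGaussian, exp_ne_zero, IsRoot]

theorem tendsto_hermiteGaussian_cocompact :
    Tendsto (hermiteGaussian n) (cocompact ℝ) (𝓝 0) := by
  have hpoly : (fun x => (realHermite n).eval x) =O[cocompact ℝ] fun x => |x| ^ (n : ℝ) := by
    have := isBigO_cobounded_of_degree_le (P := realHermite n) (Q := X ^ n)
      (by rw [degree_X_pow, degree_eq_natDegree (realHermite_monic n).ne_zero,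
        natDegree_realHermite])
    rw [Metric.cobounded_eq_cocompact] at this
    simpa only [eval_pow, eval_X, Real.norm_eq_abs, abs_pow, Real.rpow_natCast] using
      this.norm_right
  refine (hpoly.mul (Asymptotics.isBigO_refl (fun x => exp (-(x ^ 2 / 2))) _)).trans_tendsto ?_
  convert tendsto_rpow_abs_mul_exp_neg_mul_sq_cocompact (by norm_num : (0 : ℝ) < 1 / 2) n
    using 3
  ring_nf

theorem tendsto_hermiteGaussian_atTop : Tendsto (hermiteGaussian n) atTop (𝓝 0) :=
  (tendsto_hermiteGaussian_cocompact n).mono_left atTop_le_cocompact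

theorem tendsto_hermiteGaussian_atBot : Tendsto (hermiteGaussian n) atBot (𝓝 0) :=
  (tendsto_hermiteGaussian_cocompact n).mono_left atBot_le_cocompact

end HermiteGaussian

section RealHermiteRoots

variable {n : ℕ} {x : ℝ}

theorem mem_roots_toFinset_realHermite :
    x ∈ (realHermite n).roots.toFinset ↔ (realHermite n).IsRoot x := by
  rw [Multiset.mem_toFinset, mem_roots (realHermite_monic n).ne_zero]

theorem exists_isRoot_realHermite_succ_gt (hx : (realHermite n).IsRoot x) :
    ∃ z, (realHermite (n + 1)).IsRoot z ∧ x < z ∧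
      ∀ y, (realHermite n).IsRoot y → x < y → z < y := by
  have hx0 : hermiteGaussian n x = 0 := (hermiteGaussian_eq_zero_iff n).mpr hx
  by_cases h : ∃ y ∈ (realHermite n).roots.toFinset, x < y
  · obtain ⟨y, hy, hxy, hnext⟩ := Finset.exists_next_right h
    obtain ⟨z, hz, hz0⟩ := exists_hasDerivAt_eq_zero hxy
      (continuous_hermiteGaussian n).continuousOn
      (by rw [hx0, (hermiteGaussian_eq_zero_iff n).mpr
        (mem_roots_toFinset_realHermite.mp hy)])
      (fun z _ => hasDerivAt_hermiteGaussian n z)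
    exact ⟨z, (hermiteGaussian_eq_zero_iff _).mp (neg_eq_zero.mp hz0), hz.1, fun y' hy' hxy' =>
      hz.2.trans_le (hnext y' (mem_roots_toFinset_realHermite.mpr hy') hxy')⟩
  · have hfa : Tendsto (hermiteGaussian n) (𝓝[>] x) (𝓝 0) :=
      hx0 ▸ (continuous_hermiteGaussian n).continuousWithinAt
    obtain ⟨z, hz, hz0⟩ := exists_hasDerivAt_eq_zero_of_tendsto_atTop
      (fun z _ => hasDerivAt_hermiteGaussian n z) hfa (tendsto_hermiteGaussian_atTop n)
    exact ⟨z, (hermiteGaussian_eq_zero_iff _).mp (neg_eq_zero.mp hz0), hz, fun y hy hxy =>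
      (h ⟨y, mem_roots_toFinset_realHermite.mpr hy, hxy⟩).elim⟩

theorem exists_isRoot_realHermite_succ_lt (hx : (realHermite n).IsRoot x) :
    ∃ z, (realHermite (n + 1)).IsRoot z ∧ z < x := by
  have hfa : Tendsto (hermiteGaussian n) (𝓝[<] x) (𝓝 0) :=
    (hermiteGaussian_eq_zero_iff n).mpr hx ▸ (continuous_hermiteGaussian n).continuousWithinAt
  obtain ⟨z, hz, hz0⟩ := exists_hasDerivAt_eq_zero_of_tendsto_atBot
    (fun z _ => hasDerivAt_hermiteGaussian n z) hfa (tendsto_hermiteGaussian_atBot n)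
  exact ⟨z, (hermiteGaussian_eq_zero_iff _).mp (neg_eq_zero.mp hz0), hz⟩

end RealHermiteRoots

theorem card_roots_toFinset_realHermite (n : ℕ) : (realHermite n).roots.toFinset.card = n := by
  refine le_antisymm ((Multiset.toFinset_card_le _).trans
    ((card_roots' _).trans (natDegree_realHermite n).le)) ?_
  induction n with
  | zero => exact Nat.zero_le _
  | succ n ih =>
    rcases Finset.eq_empty_or_nonempty (realHermite n).roots.toFinset with hS | hS
    · obtain rfl : n = 0 := by simpa [hS] using ih
      simp [realHermite_one]
    · refine ih.trans_lt (Finset.card_lt_card_of_interlaced (fun x hx => ?_) ?_)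
      · obtain ⟨z, hz, hxz, hzy⟩ :=
          exists_isRoot_realHermite_succ_gt (mem_roots_toFinset_realHermite.mp hx)
        exact ⟨z, mem_roots_toFinset_realHermite.mpr hz, hxz,
          fun y hy => hzy y (mem_roots_toFinset_realHermite.mp hy)⟩
      · obtain ⟨z, hz, hzx⟩ := exists_isRoot_realHermite_succ_lt
          (mem_roots_toFinset_realHermite.mp (Finset.min'_mem _ hS))
        exact ⟨z, mem_roots_toFinset_realHermite.mpr hz,
          fun y hy => hzx.trans_le (Finset.min'_le _ _ hy)⟩

theorem prod_erase_sub_eq_mul_eval_realHermite {s : ℕ} {y₀ : ℝ}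
    (hy₀ : y₀ ∈ (realHermite (s + 1)).roots.toFinset) :
    ∏ y ∈ (realHermite (s + 1)).roots.toFinset.erase y₀, (y₀ - y) =
      (s + 1) * (realHermite s).eval y₀ := by
  have hnodal := (realHermite_monic (s + 1)).eq_nodal_roots_toFinset
    (by rw [natDegree_realHermite, card_roots_toFinset_realHermite])
  rw [← eval_derivative_nodal_eq_prod_erase hy₀, ← hnodal, derivative_realHermite_succ]
  simp

theorem sq_lagrangeHermite_mul_factorial_le {s : ℕ} {y₀ : ℝ}
    (hy₀ : y₀ ∈ (realHermite (s + 1)).roots.toFinset) (y : ℝ) :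
    lagrangeHermite s y₀ y ^ 2 * s ! ≤ (2 * y ^ 2 + 8 * (s + 1)) ^ s := by
  set E := (realHermite (s + 1)).roots.toFinset.erase y₀
  have hL : lagrangeHermite s y₀ y =
      (∏ y' ∈ E, (y - y')) / ((s + 1) * (realHermite s).eval y₀) := by
    rw [← prod_erase_sub_eq_mul_eval_realHermite hy₀, ← Finset.prod_div_distrib]
    rfl
  set D := (s + 1) * (realHermite s).eval y₀
  have hD : (s ! : ℝ) ≤ D ^ 2 := by
    have := factorial_le_mul_eval_sq_of_isRoot (mem_roots_toFinset_realHermite.mp hy₀)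
    nlinarith [sq_nonneg ((realHermite s).eval y₀)]
  have hcard : E.card = s := by
    rw [Finset.card_erase_of_mem hy₀, card_roots_toFinset_realHermite, Nat.add_sub_cancel]
  calc lagrangeHermite s y₀ y ^ 2 * s ! = (∏ y' ∈ E, (y - y') ^ 2) * (s ! / D ^ 2) := by
        rw [hL, div_pow, Finset.prod_pow]; ring
    _ ≤ (∏ y' ∈ E, (y - y') ^ 2) * 1 :=
        mul_le_mul_of_nonneg_left (div_le_one_of_le₀ hD (sq_nonneg _))
          (Finset.prod_nonneg fun _ _ => sq_nonneg _)
    _ ≤ ∏ _y' ∈ E, (2 * y ^ 2 + 8 * (s + 1)) := by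
        rw [mul_one]
        refine Finset.prod_le_prod (fun _ _ => sq_nonneg _) fun y' hy' => ?_
        have := sq_lt_of_isRoot_realHermite_succ
          (mem_roots_toFinset_realHermite.mp (Finset.mem_of_mem_erase hy'))
        nlinarith [sq_nonneg (y + y')]
    _ = _ := by rw [Finset.prod_const, hcard]

theorem pow_mul_exp_neg_sq_le {s : ℕ} (hs : 1 ≤ s) (y : ℝ) :
    (2 * y ^ 2 + 8 * (s + 1)) ^ s * exp (-y ^ 2 / 2) ≤ exp (3 * s) ^ 2 * s ! := by
  set v := y ^ 2 / 2 + 2 * (s + 1) with hv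
  have hs' : (1 : ℝ) ≤ s := by exact_mod_cast hs
  have hpow : v ^ s ≤ exp v * s ! :=
    (div_le_iff₀ (by positivity)).mp (pow_div_factorial_le_exp v (by positivity) s)
  have h4 : (4 : ℝ) ^ s ≤ exp (2 * s) := by
    rw [mul_comm, exp_nat_mul]
    gcongr
    linarith [quadratic_le_exp_of_nonneg (zero_le_two : (0 : ℝ) ≤ 2)]
  have hexp : exp v * exp (-y ^ 2 / 2) = exp (2 * (s + 1)) := by
    rw [← exp_add, hv]; ring_nf
  calc (2 * y ^ 2 + 8 * (s + 1)) ^ s * exp (-y ^ 2 / 2)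
      = 4 ^ s * v ^ s * exp (-y ^ 2 / 2) := by rw [← mul_pow, hv]; ring_nf
    _ ≤ 4 ^ s * (exp v * s !) * exp (-y ^ 2 / 2) := by gcongr
    _ = 4 ^ s * exp (2 * (s + 1)) * s ! := by rw [← hexp]; ring
    _ ≤ exp (2 * s) * exp (4 * s) * s ! := by
        gcongr ?_ * ?_ * _
        exact exp_le_exp.mpr (by linarith)
    _ = exp (3 * s) ^ 2 * s ! := by rw [← exp_add, sq, ← exp_add]; ring_nf

/-- Lemma A.4, inequality (norm-L_infty): there is `K > 0` such
that for every `s ≥ 1` and every root `y₀` of `He_{s+1}`,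
`sup_{y∈ℝ} |L_{s;y₀}(y)| √(g(y)) ≤ e^{Ks}` (stated pointwise in `y`), where
`g(y) = (2π)^{-1/2} e^{-y²/2}`. -/
theorem stmt_10 :
    ∃ K > (0 : ℝ), ∀ s : ℕ, 1 ≤ s →
      ∀ y₀ ∈ (((Polynomial.hermite (s + 1)).map (Int.castRingHom ℝ)).roots).toFinset,
        ∀ y : ℝ,
          |lagrangeHermite s y₀ y| *
              Real.sqrt ((Real.sqrt (2 * Real.pi))⁻¹ * Real.exp (-y ^ 2 / 2)) ≤
            Real.exp (K * s) := by
  refine ⟨3, by norm_num, fun s hs y₀ hy₀ y => ?_⟩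
  set L := lagrangeHermite s y₀ y
  have hc : (√(2 * π))⁻¹ ≤ 1 :=
    inv_le_one_of_one_le₀ (one_le_sqrt.mpr (by nlinarith [pi_gt_three]))
  have hsq : L ^ 2 * exp (-y ^ 2 / 2) ≤ exp (3 * s) ^ 2 := by
    refine le_of_mul_le_mul_right ?_ (by positivity : (0 : ℝ) < s !)
    calc L ^ 2 * exp (-y ^ 2 / 2) * s ! = L ^ 2 * s ! * exp (-y ^ 2 / 2) := by ring
      _ ≤ (2 * y ^ 2 + 8 * (s + 1)) ^ s * exp (-y ^ 2 / 2) := by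
          gcongr; exact sq_lagrangeHermite_mul_factorial_le hy₀ y
      _ ≤ _ := pow_mul_exp_neg_sq_le hs y
  calc |L| * √((√(2 * π))⁻¹ * exp (-y ^ 2 / 2))
      = √(L ^ 2 * ((√(2 * π))⁻¹ * exp (-y ^ 2 / 2))) := by
        rw [sqrt_mul (sq_nonneg _), sqrt_sq_eq_abs]
    _ ≤ √(exp (3 * s) ^ 2) := sqrt_le_sqrt <|
        (mul_le_mul_of_nonneg_left (mul_le_of_le_one_left (exp_pos _).le hc) (sq_nonneg _)).trans
          hsq
    _ = exp (3 * s) := sqrt_sq (exp_pos _).le
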